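/- arXiv:2101.01814 — 2 statements merged into one kernel-verified Lean document; each statement's English description precedes it below -/
import Mathlib

section
/- Let κ be a regular uncountable cardinal such that κ^{<κ} = κ, and let T be a κ⁺-tree which is R_κ-embeddable. Then the subtree T↾(κ⁺ ∩ cof(<κ)) is special, i.e., there exists a function from T↾(κ⁺ ∩ cof(<κ)) to κ which is injective on chains; in particular, T is not Suslin. -/
universe u

open Cardinal Set

namespace FarTrees

/-- `QSet κ`: the set of functions `f : κ → 2` whose support is non-empty
and has size less than `κ` (the underlying set of the linear order `Q_κ`). -/
def QSet (κ : Cardinal.{u}) : Set (κ.ord.ToType → Bool) :=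
  {f | (∃ i, f i = true) ∧ #{i | f i = true} < κ}

/-- The lexicographic strict order on functions `κ → 2` (with `false < true`). -/
def qlt {κ : Cardinal.{u}} (f g : κ.ord.ToType → Bool) : Prop :=
  ∃ i, (∀ j, j < i → f j = g j) ∧ f i < g i

/-- The corresponding non-strict order. -/
def qle {κ : Cardinal.{u}} (f g : κ.ord.ToType → Bool) : Prop :=
  qlt f g ∨ f = g

/-- `(R, e)` is a Dedekind completion of `Q_κ`: `R` is a (conditionally) complete
dense linear order without endpoints, and `e` is an order embedding of `Q_κ`
into `R` with dense image. -/
def IsDedekindCompletion (κ : Cardinal.{u}) (R : Type u) [LinearOrder R]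
    (e : QSet κ → R) : Prop :=
  (∀ p q : QSet κ, qlt p.1 q.1 ↔ e p < e q) ∧
  (∀ a b : R, a < b → ∃ q : QSet κ, a < e q ∧ e q < b) ∧
  (∀ a : R, ∃ b, b < a) ∧ (∀ a : R, ∃ b, a < b) ∧
  (∀ s : Set R, s.Nonempty → BddAbove s → ∃ a, IsLUB s a)

/-- `A` is unbounded (cofinal) in the ordinal `δ`. -/
def UnbIn (δ : Ordinal.{u}) (A : Set Ordinal.{u}) : Prop :=
  ∀ γ < δ, ∃ β ∈ A, γ ≤ β ∧ β < δ

/-- `β` is a limit point (accumulation point) of the set of ordinals `A`. -/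
def IsAccOf (β : Ordinal.{u}) (A : Set Ordinal.{u}) : Prop :=
  0 < β ∧ ∀ γ < β, ∃ c ∈ A, γ < c ∧ c < β

/-- `C` is a club (closed and unbounded) subset of the ordinal `δ`. -/
def IsClubIn (δ : Ordinal.{u}) (C : Set Ordinal.{u}) : Prop :=
  C ⊆ Iio δ ∧ UnbIn δ C ∧ ∀ β < δ, IsAccOf β C → β ∈ C

/-- `S` is a stationary subset of the ordinal `δ`: it meets every club in `δ`. -/
def IsStationaryIn (δ : Ordinal.{u}) (S : Set Ordinal.{u}) : Prop :=
  ∀ C, IsClubIn δ C → (S ∩ C).Nonempty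

/-- The set of ordinals `A` has order type at most `δ`, i.e. it order-embeds
into `δ` (for well-orders this is equivalent to `type A ≤ δ`). -/
def OtypeLE (A : Set Ordinal.{u}) (δ : Ordinal.{u}) : Prop :=
  ∃ f : A → Ordinal.{u}, (∀ a, f a < δ) ∧ ∀ a b : A, a.1 < b.1 → f a < f b

/-- `κ⁺ ∩ cof(κ)`: the ordinals below `κ⁺` of cofinality `κ`. -/
def cofSet (κ : Cardinal.{u}) : Set Ordinal.{u} :=
  {α | α < (Order.succ κ).ord ∧ α.cof = κ}

/-- The Brodsky–Rinot proxy principle `⊠*_κ(𝒮)`: there is a sequence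
`⟨C_δ : δ < κ⁺⟩`, each `C_δ` a club in `δ` of order type at most `κ`, such that
for every unbounded `X ⊆ κ⁺` and every `S ∈ 𝒮` there are stationarily many
`δ ∈ S` with `(C_δ ∩ X) \ lim(C_δ)` cofinal in `δ`. -/
def Boxtimes (κ : Cardinal.{u}) (𝒮 : Set (Set Ordinal.{u})) : Prop :=
  ∃ Cs : Ordinal.{u} → Set Ordinal.{u},
    (∀ δ < (Order.succ κ).ord, IsClubIn δ (Cs δ) ∧ OtypeLE (Cs δ) κ.ord) ∧
    ∀ X : Set Ordinal.{u}, X ⊆ Iio (Order.succ κ).ord →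
      UnbIn (Order.succ κ).ord X → ∀ S ∈ 𝒮,
      IsStationaryIn (Order.succ κ).ord
        {δ ∈ S | UnbIn δ ((Cs δ ∩ X) \ {β | IsAccOf β (Cs δ)})}

/-- A tree: a strict partial order in which the set of predecessors of every
element is well-ordered. -/
structure Tree' (α : Type u) where
  lt : α → α → Prop
  trans : ∀ {x y z}, lt x y → lt y z → lt x z
  irrefl : ∀ x, ¬ lt x x
  wo : ∀ x : α, IsWellOrder {y // lt y x} (fun a b => lt a.1 b.1)

namespace Tree'

variable {α β : Type u}

/-- The height of a node: the order type of its set of predecessors. -/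
noncomputable def ht (T : Tree' α) (x : α) : Ordinal.{u} :=
  @Ordinal.type {y // T.lt y x} (fun a b => T.lt a.1 b.1) (T.wo x)

/-- Level `δ` of the tree. -/
def level (T : Tree' α) (δ : Ordinal.{u}) : Set α := {x | T.ht x = δ}

/-- `T` is a `λ`-tree: it has height `λ` and all levels of size `< λ`. -/
def IsKTree (T : Tree' α) (lam : Cardinal.{u}) : Prop :=
  (∀ x, T.ht x < lam.ord) ∧ (∀ δ < lam.ord, (T.level δ).Nonempty) ∧
  ∀ δ < lam.ord, #(T.level δ) < lam

/-- A chain: a linearly ordered subset. -/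
def IsChain (T : Tree' α) (c : Set α) : Prop :=
  ∀ x ∈ c, ∀ y ∈ c, x ≠ y → T.lt x y ∨ T.lt y x

/-- An antichain: a set of pairwise incomparable elements. -/
def IsAntichain (T : Tree' α) (A : Set α) : Prop :=
  ∀ x ∈ A, ∀ y ∈ A, x ≠ y → ¬ T.lt x y ∧ ¬ T.lt y x

/-- A branch: a maximal chain. -/
def IsBranch (T : Tree' α) (b : Set α) : Prop :=
  T.IsChain b ∧ ∀ c, T.IsChain c → b ⊆ c → b = c

/-- A cofinal branch of a `λ`-tree: a branch meeting every level below `λ`. -/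
def IsCofinalBranch (T : Tree' α) (lam : Cardinal.{u}) (b : Set α) : Prop :=
  T.IsBranch b ∧ ∀ δ < lam.ord, ∃ x ∈ b, T.ht x = δ

/-- A `λ`-Aronszajn tree: a `λ`-tree with no cofinal branch. -/
def IsAronszajn (T : Tree' α) (lam : Cardinal.{u}) : Prop :=
  T.IsKTree lam ∧ ¬ ∃ b, T.IsCofinalBranch lam b

/-- A Suslin `λ`-tree: a `λ`-tree with no chains or antichains of size `λ`. -/
def IsSuslin (T : Tree' α) (lam : Cardinal.{u}) : Prop :=
  T.IsKTree lam ∧ (∀ c, T.IsChain c → #c < lam) ∧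
    ∀ A, T.IsAntichain A → #A < lam

/-- Normality of a `λ`-tree. -/
def IsNormal (T : Tree' α) (lam : Cardinal.{u}) : Prop :=
  (∀ x, ∀ γ, T.ht x < γ → γ < lam.ord → ∃ y, T.lt x y ∧ T.ht y = γ) ∧
  (∀ x y, x ≠ y → T.ht x = T.ht y → Order.IsSuccLimit (T.ht x) →
    {z | T.lt z x} ≠ {z | T.lt z y}) ∧
  (∀ x, ∃ y z, T.lt x y ∧ T.lt x z ∧ y ≠ z ∧ ¬ T.lt y z ∧ ¬ T.lt z y)

/-- `κ`-completeness: every chain of order type `< κ` has an upper bound. -/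
def IsComplete (T : Tree' α) (κ : Cardinal.{u}) : Prop :=
  ∀ δ : Ordinal.{u}, δ < κ.ord → ∀ s : δ.ToType → α,
    (∀ i j, i < j → T.lt (s i) (s j)) →
    ∃ u, ∀ i, T.lt (s i) u ∨ s i = u

/-- `T` is `L`-embeddable: some map into `L` is strictly increasing on `<_T`. -/
def LEmbeddable (T : Tree' α) (L : Type u) [LT L] : Prop :=
  ∃ f : α → L, ∀ x y, T.lt x y → f x < f y

/-- `T` is special (for a tree of height `μ⁺`): there is a map into `μ`
injective on chains. -/
def IsSpecial (T : Tree' α) (μ : Cardinal.{u}) : Prop :=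
  ∃ g : α → μ.ord.ToType, ∀ x y, T.lt x y → g x ≠ g y

/-- The restriction `T↾S` is special: there is a map from the nodes of height
in `S` into `μ` which is injective on chains. -/
def IsSpecialOn (T : Tree' α) (S : Set Ordinal.{u}) (μ : Cardinal.{u}) : Prop :=
  ∃ g : {x : α // T.ht x ∈ S} → μ.ord.ToType,
    ∀ x y : {x : α // T.ht x ∈ S}, T.lt x.1 y.1 → g x ≠ g y

/-- A downward closed subset of a tree. -/
def DownwardClosed (T : Tree' α) (D : Set α) : Prop :=
  ∀ x ∈ D, ∀ y, T.lt y x → y ∈ D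

end Tree'

/-- A club isomorphism of `T` and `U` on the club `C`: an order isomorphism
between `T↾C` and `U↾C`. -/
def ClubIsoOn {α β : Type u} (T : Tree' α) (U : Tree' β)
    (C : Set Ordinal.{u}) : Prop :=
  ∃ f : {x : α // T.ht x ∈ C} → {y : β // U.ht y ∈ C},
    Function.Bijective f ∧ ∀ x y, T.lt x.1 y.1 ↔ U.lt (f x).1 (f y).1

/-- `T` and `U` are club isomorphic `λ`-trees. -/
def ClubIsomorphic {α β : Type u} (T : Tree' α) (U : Tree' β)
    (lam : Cardinal.{u}) : Prop :=
  ∃ C, IsClubIn lam.ord C ∧ ClubIsoOn T U C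

/-- `T` and `U` are near: they have downward closed subtrees which are club
isomorphic.  (For downward closed subtrees, heights in the subtree agree with
heights in the ambient tree.) -/
def Near {α β : Type u} (T : Tree' α) (U : Tree' β) (lam : Cardinal.{u}) : Prop :=
  ∃ D₁ : Set α, ∃ D₂ : Set β, T.DownwardClosed D₁ ∧ U.DownwardClosed D₂ ∧
    ∃ C, IsClubIn lam.ord C ∧
      ∃ f : {x : α // x ∈ D₁ ∧ T.ht x ∈ C} → {y : β // y ∈ D₂ ∧ U.ht y ∈ C},
        Function.Bijective f ∧ ∀ x y, T.lt x.1 y.1 ↔ U.lt (f x).1 (f y).1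

/-- `T` and `U` are far: they are not near. -/
def Far {α β : Type u} (T : Tree' α) (U : Tree' β) (lam : Cardinal.{u}) : Prop :=
  ¬ Near T U lam

/-!
Fix a strictly increasing `f : T → R`. At a node `x` whose height has cofinality `< κ`, a set of
fewer than `κ` values of `f` is cofinal among the values below `x`. Every family of fewer than `κ`
elements of `Q_κ` has a lexicographic supremum in `Q_κ`; squeezing points of `Q_κ` between these
values and `f x` and taking their supremum gives `q_x ∈ Q_κ` with `f y < q_x ≤ f x` for all
`y <_T x`. Hence `x ↦ q_x` is injective on chains, and `|Q_κ| ≤ κ^{<κ} = κ`.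
In a Suslin `κ⁺`-tree the colour classes are antichains, so there would be only `κ` nodes of
such heights, although every successor level is nonempty.
-/

section LexSup

variable {ι J : Type*} [LinearOrder ι] [WellFoundedLT ι]

open scoped Classical in
noncomputable def lexSup (q : J → ι → Bool) : ι → Bool :=
  wellFounded_lt.fix fun a rec =>
    decide (∃ k, (∀ b (hb : b < a), q k b = rec b hb) ∧ q k a = true)

theorem lexSup_eq_true_iff (q : J → ι → Bool) (a : ι) :
    lexSup q a = true ↔ ∃ k, (∀ b < a, q k b = lexSup q b) ∧ q k a = true := by
  rw [lexSup, WellFounded.fix_eq]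
  simp only [decide_eq_true_eq]

theorem le_lexSup (q : J → ι → Bool) (k : J) : toLex (q k) ≤ toLex (lexSup q) := by
  refine not_lt.1 fun ⟨a, hagree, hlt⟩ => ?_
  obtain ⟨hsup, hk⟩ := Bool.lt_iff.1 hlt
  have := (lexSup_eq_true_iff q a).2 ⟨k, fun b hb => (hagree b hb).symm, hk⟩
  exact Bool.false_ne_true (hsup.symm.trans this)

theorem exists_lt_of_lt_lexSup (q : J → ι → Bool) {y : ι → Bool}
    (h : toLex y < toLex (lexSup q)) : ∃ k, toLex y < toLex (q k) := by
  obtain ⟨a, hagree, hlt⟩ := h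
  obtain ⟨hy, hsup⟩ := Bool.lt_iff.1 hlt
  obtain ⟨k, hk, hka⟩ := (lexSup_eq_true_iff q a).1 hsup
  exact ⟨k, a, fun b hb => (hagree b hb).trans (hk b hb).symm,
    Bool.lt_iff.2 ⟨hy, hka⟩⟩

theorem isLUB_lexSup (q : J → ι → Bool) :
    IsLUB (range fun k => toLex (q k)) (toLex (lexSup q)) :=
  ⟨forall_mem_range.2 (le_lexSup q), fun _ hy => not_lt.1 fun h =>
    let ⟨k, hk⟩ := exists_lt_of_lt_lexSup q h
    (hy (mem_range_self k)).not_gt hk⟩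

theorem exists_eq_true_of_lexSup_eq_true {q : J → ι → Bool} {a : ι} (h : lexSup q a = true) :
    ∃ k, q k a = true :=
  ((lexSup_eq_true_iff q a).1 h).imp fun _ hk => hk.2

end LexSup

theorem exists_forall_lt_of_mk_lt_cof {β : Type*} [LinearOrder β] {s : Set β}
    (hs : #s < Order.cof β) : ∃ b, ∀ a ∈ s, a < b :=
  not_isCofinal_iff.1 fun hcof => (Order.cof_le hcof).not_gt hs

section QSet

variable {κ : Cardinal.{u}}

theorem qlt_iff_toLex_lt {f g : κ.ord.ToType → Bool} : qlt f g ↔ toLex f < toLex g :=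
  Iff.rfl

theorem exists_isLUB_qSet (hreg : κ.IsRegular) {J : Type u} [Nonempty J] (hJ : #J < κ)
    (q : J → QSet κ) : ∃ z : QSet κ, IsLUB (range fun k => toLex (q k).1) (toLex z.1) := by
  set z := lexSup fun k => (q k).1
  refine ⟨⟨z, ?_, ?_⟩, isLUB_lexSup _⟩
  · obtain ⟨k⟩ := ‹Nonempty J›
    obtain ⟨a, ha⟩ := (q k).2.1
    by_contra! hz
    have hzk : toLex z ≤ toLex (q k).1 :=
      Pi.toLex_monotone fun i => by simp [Bool.eq_false_iff.2 (hz i)]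
    have hzq : toLex z = toLex (q k).1 := le_antisymm hzk (le_lexSup (fun k => (q k).1) k)
    exact hz a ((congrFun hzq a).trans ha)
  · calc #{i | z i = true}
        ≤ #(⋃ k, {i | (q k).1 i = true}) :=
          mk_le_mk_of_subset fun i hi => mem_iUnion.2 (exists_eq_true_of_lexSup_eq_true hi)
      _ ≤ #J * ⨆ k, #{i | (q k).1 i = true} := mk_iUnion_le _
      _ < κ := mul_lt_of_lt hreg.aleph0_le hJ
          (iSup_lt_of_lt_cof_ord (by rwa [hreg.cof_ord]) fun k => (q k).2.2)

theorem mk_qSet_le (hreg : κ.IsRegular) (hpow : κ ^< κ = κ) : #(QSet κ) ≤ κ := by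
  set bounded : κ.ord.ToType → Set (κ.ord.ToType → Bool) :=
    fun b => {f | ∀ a, f a = true → a < b}
  have hcover : QSet κ ⊆ ⋃ b, bounded b := fun q hq =>
    mem_iUnion.2 (exists_forall_lt_of_mk_lt_cof (s := {a | q a = true})
      (by rw [Ordinal.cof_toType, hreg.cof_ord]; exact hq.2))
  have hbounded : ∀ b, #(bounded b) ≤ κ := by
    intro b
    have hinj : Function.Injective fun f : bounded b => fun a : Iio b => f.1 a := by
      intro f g hfg
      ext a
      by_cases hab : a < b
      · exact congrFun hfg ⟨a, hab⟩
      · rw [Bool.eq_false_iff.2 fun h => hab (f.2 a h), Bool.eq_false_iff.2 fun h => hab (g.2 a h)]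
    calc #(bounded b) ≤ #(Iio b → Bool) := mk_le_of_injective hinj
      _ = 2 ^ #(Iio b) := by simp
      _ ≤ κ ^ #(Iio b) := power_le_power_right (ofNat_le_aleph0.trans hreg.aleph0_le)
      _ ≤ κ ^< κ := le_powerlt κ (by simpa using mk_Iio_lt b)
      _ = κ := hpow
  calc #(QSet κ) ≤ #(⋃ b, bounded b) := mk_le_mk_of_subset hcover
    _ ≤ #κ.ord.ToType * ⨆ b, #(bounded b) := mk_iUnion_le _
    _ ≤ κ * κ := by rw [mk_ord_toType]; exact mul_le_mul_right (ciSup_le' hbounded) κ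
    _ = κ := mul_eq_self hreg.aleph0_le

variable {R : Type u} [LinearOrder R] {e : QSet κ → R}

theorem exists_qSet_between (hreg : κ.IsRegular)
    (hord : ∀ p q : QSet κ, qlt p.1 q.1 ↔ e p < e q)
    (hdense : ∀ a b : R, a < b → ∃ q : QSet κ, a < e q ∧ e q < b)
    {A : Set R} (hA : #A < κ) (hne : A.Nonempty) {b : R} (hAb : ∀ a ∈ A, a < b) :
    ∃ q : QSet κ, (∀ a ∈ A, a < e q) ∧ e q ≤ b := by
  have hle : ∀ p q : QSet κ, toLex p.1 ≤ toLex q.1 ↔ e p ≤ e q := fun p q => by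
    rw [← not_lt, ← not_lt, ← hord]
    exact not_congr qlt_iff_toLex_lt
  choose r hr using fun a : A => hdense a b (hAb a a.2)
  have := hne.to_subtype
  obtain ⟨z, hz⟩ := exists_isLUB_qSet hreg hA r
  refine ⟨z, fun a ha => (hr ⟨a, ha⟩).1.trans_le ((hle _ _).1 (hz.1 (mem_range_self _))),
    not_lt.1 fun hbz => ?_⟩
  obtain ⟨q', hbq', hq'z⟩ := hdense b (e z) hbz
  have : toLex z.1 ≤ toLex q'.1 :=
    hz.2 (forall_mem_range.2 fun a => (hle _ _).2 ((hr a).2.trans hbq').le)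
  exact ((hle _ _).1 this).not_gt hq'z

end QSet

namespace Tree'

variable {α : Type u}

theorem exists_cofinal_predecessors (T : Tree' α) (x : α) :
    ∃ s : Set α, #s = (T.ht x).cof ∧ (∀ y ∈ s, T.lt y x) ∧
      ∀ y, T.lt y x → ∃ z ∈ s, y = z ∨ T.lt y z := by
  classical
  let := T.wo x
  let : LinearOrder {y // T.lt y x} := linearOrderOfSTO fun a b => T.lt a.1 b.1
  have : WellFoundedLT {y // T.lt y x} := ⟨(T.wo x).wf⟩
  obtain ⟨S, hS, hSc⟩ := Order.exists_cof_eq {y // T.lt y x}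
  refine ⟨Subtype.val '' S, ?_, ?_, fun y hy => ?_⟩
  · rw [mk_image_eq Subtype.val_injective, hSc, ← Ordinal.cof_type]
    rfl
  · rintro _ ⟨y, -, rfl⟩
    exact y.2
  · obtain ⟨z, hz, hyz⟩ := hS ⟨y, hy⟩
    refine ⟨z.1, mem_image_of_mem _ hz, ?_⟩
    rcases hyz with h | h
    exacts [Or.inl (congrArg Subtype.val h), Or.inr h]

theorem IsSpecialOn.mk_le {T : Tree' α} {S : Set Ordinal.{u}} {μ : Cardinal.{u}}
    (h : T.IsSpecialOn S μ) (hμ : ℵ₀ ≤ μ) (hA : ∀ A, T.IsAntichain A → #A ≤ μ) :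
    #{x // T.ht x ∈ S} ≤ μ := by
  obtain ⟨g, hg⟩ := h
  have hfibre : ∀ t, #(g ⁻¹' {t}) ≤ μ := by
    intro t
    rw [← mk_image_eq Subtype.val_injective]
    refine hA _ ?_
    rintro _ ⟨x, hx, rfl⟩ _ ⟨y, hy, rfl⟩ -
    exact ⟨fun h => hg x y h (hx.trans hy.symm), fun h => hg y x h (hy.trans hx.symm)⟩
  calc #{x // T.ht x ∈ S} ≤ #μ.ord.ToType * μ := mk_le_mk_mul_of_mk_preimage_le g hfibre
    _ = μ := by rw [mk_ord_toType, mul_eq_self hμ]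

theorem IsKTree.le_mk_of_succ_mem {T : Tree' α} {lam : Cardinal.{u}} (hT : T.IsKTree lam)
    (hlam : ℵ₀ ≤ lam) {S : Set Ordinal.{u}}
    (hS : ∀ δ, Order.succ δ < lam.ord → Order.succ δ ∈ S) :
    lam ≤ #{x // T.ht x ∈ S} := by
  have hsucc : ∀ t : lam.ord.ToType, Order.succ (Ordinal.ToType.mk.symm t).1 < lam.ord :=
    fun t => (isSuccLimit_ord hlam).succ_lt (Ordinal.ToType.mk.symm t).2
  choose node hnode using fun t => hT.2.1 _ (hsucc t)
  have hinj : Function.Injective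
      fun t => (⟨node t, (hnode t).symm ▸ hS _ (hsucc t)⟩ : {x // T.ht x ∈ S}) := by
    intro t t' htt'
    have h := (hnode t).symm.trans ((congrArg (T.ht ∘ Subtype.val) htt').trans (hnode t'))
    exact Ordinal.ToType.mk.symm.injective (Subtype.ext (Order.succ_injective h))
  simpa using mk_le_of_injective hinj

end Tree'

section Embeddable

variable {κ : Cardinal.{u}} {R : Type u} [LinearOrder R] {e : QSet κ → R} {α : Type u}

theorem exists_qSet_separating (hreg : κ.IsRegular)
    (hord : ∀ p q : QSet κ, qlt p.1 q.1 ↔ e p < e q)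
    (hdense : ∀ a b : R, a < b → ∃ q : QSet κ, a < e q ∧ e q < b)
    (hnomin : ∀ a : R, ∃ b, b < a) (T : Tree' α) {f : α → R}
    (hf : ∀ x y, T.lt x y → f x < f y) {x : α} (hx : (T.ht x).cof < κ) :
    ∃ q : QSet κ, (∀ y, T.lt y x → f y < e q) ∧ e q ≤ f x := by
  obtain ⟨s, hs, hsx, hcof⟩ := T.exists_cofinal_predecessors x
  -- `c` keeps the set below nonempty when `x` is a root.
  obtain ⟨c, hc⟩ := hnomin (f x)
  have hA : #(insert c (f '' s) : Set R) < κ :=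
    mk_insert_le.trans_lt <| add_lt_of_lt hreg.aleph0_le (mk_image_le.trans_lt (hs ▸ hx))
      (one_lt_aleph0.trans_le hreg.aleph0_le)
  obtain ⟨q, hq, hqx⟩ := exists_qSet_between hreg hord hdense hA (insert_nonempty _ _) <| by
    rintro a (rfl | ⟨y, hy, rfl⟩)
    exacts [hc, hf y x (hsx y hy)]
  refine ⟨q, fun y hy => ?_, hqx⟩
  obtain ⟨z, hz, hyz⟩ := hcof y hy
  have hzq : f z < e q := hq _ (mem_insert_of_mem _ (mem_image_of_mem f hz))
  rcases hyz with rfl | hyz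
  exacts [hzq, (hf y z hyz).trans hzq]

theorem isSpecialOn_of_lEmbeddable (hreg : κ.IsRegular) (hpow : κ ^< κ = κ)
    (hRe : IsDedekindCompletion κ R e) (T : Tree' α) (hemb : T.LEmbeddable R)
    {S : Set Ordinal.{u}} (hS : ∀ δ ∈ S, δ.cof < κ) : T.IsSpecialOn S κ := by
  obtain ⟨hord, hdense, hnomin, -, -⟩ := hRe
  obtain ⟨f, hf⟩ := hemb
  choose q hq hqx using fun x : {x // T.ht x ∈ S} =>
    exists_qSet_separating hreg hord hdense hnomin T hf (hS _ x.2)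
  obtain ⟨j⟩ : Nonempty (QSet κ ↪ κ.ord.ToType) := by
    rw [← le_def, mk_ord_toType]
    exact mk_qSet_le hreg hpow
  refine ⟨fun x => j (q x), fun x y hxy hj => ?_⟩
  have hxy' := hq y x.1 hxy
  rw [← j.injective hj] at hxy'
  exact (hqx x).not_gt hxy'

end Embeddable

theorem stmt18_general (κ : Cardinal.{u}) (hreg : κ.IsRegular)
    (hpow : κ ^< κ = κ) {α : Type u} (T : Tree' α)
    (hT : T.IsKTree (Order.succ κ))
    (R : Type u) [LinearOrder R] (e : QSet κ → R)
    (hRe : IsDedekindCompletion κ R e) (hemb : T.LEmbeddable R) :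
    T.IsSpecialOn {δ | δ < (Order.succ κ).ord ∧ δ.cof < κ} κ ∧
      ¬ T.IsSuslin (Order.succ κ) := by
  set S : Set Ordinal.{u} := {δ | δ < (Order.succ κ).ord ∧ δ.cof < κ}
  have hκ := hreg.aleph0_le
  have hsp : T.IsSpecialOn S κ :=
    isSpecialOn_of_lEmbeddable hreg hpow hRe T hemb fun _ hδ => hδ.2
  refine ⟨hsp, fun hSus => ?_⟩
  have hsmall := hsp.mk_le hκ fun A hA => Order.lt_succ_iff.1 (hSus.2.2 A hA)
  have hlarge := hT.le_mk_of_succ_mem (S := S) (hκ.trans (Order.le_succ κ)) fun δ hδ =>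
    ⟨hδ, by rw [Order.succ_eq_add_one, Ordinal.cof_add_one]; exact one_lt_aleph0.trans_le hκ⟩
  exact (Order.lt_succ κ).not_ge (hlarge.trans hsmall)

/-- If `κ^{<κ} = κ` and `T` is an `R_κ`-embeddable `κ⁺`-tree then
`T↾(κ⁺ ∩ cof(<κ))` is special; in particular `T` is not Suslin. -/
theorem stmt18 (κ : Cardinal.{u}) (hreg : κ.IsRegular) (hunc : ℵ₀ < κ)
    (hpow : κ ^< κ = κ) {α : Type u} (T : Tree' α)
    (hT : T.IsKTree (Order.succ κ))
    (R : Type u) [LinearOrder R] (e : QSet κ → R)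
    (hRe : IsDedekindCompletion κ R e) (hemb : T.LEmbeddable R) :
    T.IsSpecialOn {δ | δ < (Order.succ κ).ord ∧ δ.cof < κ} κ ∧
      ¬ T.IsSuslin (Order.succ κ) :=
  stmt18_general κ hreg hpow T hT R e hRe hemb

end FarTrees
end

section
/- Let μ be an infinite cardinal, let λ = μ⁺, let T be a λ-tree, and let C ⊆ λ be a club such that T↾C is special, i.e., there exists a function from T↾C to μ which is injective on chains. Then T is special: there exists a function from T to μ which is injective on chains. Consequently, a special λ-tree cannot be club isomorphic to a λ-tree which is not special. -/
universe u

open Cardinal Set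

namespace FarTrees

/-!
Let `B(x)` be the largest point of the club `C` at or below `ht x`. By closedness of `C`, `B(x) ∈ C`
as soon as `C` has a point below `ht x`, and the heights `d` with `B(d) = b` all lie below the next
point of `C` above `b`, so below `μ⁺` there are at most `μ` of them. Colour `x` by the pair
(colour of its predecessor-or-self at level `B(x)`, position of `ht x` among the heights with the
same `B`). If `x < y` get the same colour then `B(x) = B(y)` is excluded by the second coordinate,
and `B(x) < B(y)` by the first, since the two predecessors are comparable in `T↾C`.
A club isomorphism transports a specialising map of `T` to one of `U↾C`, which gives the
second claim.
-/

universe v w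

namespace Tree'

variable {α : Type u} (T : Tree' α)

theorem ht_eq_typein {z x : α} (h : T.lt z x) :
    T.ht z = @Ordinal.typein {y // T.lt y x} (fun a b => T.lt a.1 b.1) (T.wo x) ⟨z, h⟩ := by
  have := T.wo x
  have := T.wo z
  rw [← Ordinal.type_subrel]
  exact Ordinal.type_eq.2 ⟨⟨⟨fun w => ⟨⟨w.1, T.trans w.2 h⟩, w.2⟩, fun b => ⟨b.1.1, b.2⟩,
    fun _ => rfl, fun _ => rfl⟩, Iff.rfl⟩⟩

variable {T}

theorem ht_lt_ht {z x : α} (h : T.lt z x) : T.ht z < T.ht x := by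
  have := T.wo x
  rw [T.ht_eq_typein h]
  exact Ordinal.typein_lt_type _ _

theorem exists_le_ht_eq (x : α) {b : Ordinal.{u}} (hb : b ≤ T.ht x) :
    ∃ z, (T.lt z x ∨ z = x) ∧ T.ht z = b := by
  rcases hb.lt_or_eq with hb | rfl
  · have := T.wo x
    let z := Ordinal.enum (fun a b : {y // T.lt y x} => T.lt a.1 b.1) ⟨b, hb⟩
    exact ⟨z.1, Or.inl z.2, by rw [T.ht_eq_typein z.2]; exact Ordinal.typein_enum _ _⟩
  · exact ⟨x, Or.inr rfl, rfl⟩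

theorem lt_of_ht_lt {a b y : α} (ha : T.lt a y) (hb : T.lt b y ∨ b = y)
    (h : T.ht a < T.ht b) : T.lt a b := by
  rcases hb with hb | rfl
  · have := T.wo y
    rcases trichotomous_of (fun a b : {z // T.lt z y} => T.lt a.1 b.1) ⟨a, ha⟩ ⟨b, hb⟩ with
      hab | hab | hba
    · exact hab
    · cases congrArg Subtype.val hab
      exact absurd h (lt_irrefl _)
    · exact absurd (ht_lt_ht hba) h.not_gt
  · exact ha

theorem IsSpecial.of_colouring {μ : Cardinal.{u}} {γ : Type u} (c : α → γ)
    (hc : ∀ x y, T.lt x y → c x ≠ c y) (hγ : #γ ≤ μ) : T.IsSpecial μ := by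
  obtain ⟨e⟩ : Nonempty (γ ↪ μ.ord.ToType) := by
    rwa [← Cardinal.le_def, Cardinal.mk_toType, Cardinal.card_ord]
  exact ⟨e ∘ c, fun x y hxy he => hc x y hxy (e.injective he)⟩

end Tree'

theorem exists_injOn_of_lift_mk_le {γ : Type v} {β : Type w} [Nonempty β] {s : Set γ}
    (h : Cardinal.lift.{w} #s ≤ Cardinal.lift.{v} #β) : ∃ F : γ → β, InjOn F s := by
  obtain ⟨e⟩ := Cardinal.lift_mk_le'.1 h
  refine ⟨Function.extend Subtype.val e fun _ => Classical.arbitrary β, fun x hx y hy hxy => ?_⟩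
  rw [Subtype.val_injective.extend_apply e _ ⟨x, hx⟩,
    Subtype.val_injective.extend_apply e _ ⟨y, hy⟩] at hxy
  exact congrArg Subtype.val (e.injective hxy)

/-- The largest point of `C` at or below `d`, or `0 = sSup ∅` if there is none. -/
noncomputable def lastLE (C : Set Ordinal.{u}) (d : Ordinal.{u}) : Ordinal.{u} :=
  sSup (C ∩ Iic d)

section lastLE

variable {C : Set Ordinal.{u}} {b d d' : Ordinal.{u}}

theorem lastLE_le : lastLE C d ≤ d :=
  csSup_le' fun _ hc => hc.2

theorem le_lastLE {c : Ordinal.{u}} (hc : c ∈ C) (hcd : c ≤ d) : c ≤ lastLE C d :=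
  le_csSup ⟨d, fun _ h => h.2⟩ ⟨hc, hcd⟩

theorem lastLE_mono (h : d ≤ d') : lastLE C d ≤ lastLE C d' :=
  csSup_le_csSup' ⟨d', fun _ h => h.2⟩ fun _ hc => ⟨hc.1, hc.2.trans h⟩

theorem lastLE_mem {lam : Ordinal.{u}} (hclosed : ∀ β < lam, IsAccOf β C → β ∈ C)
    (hd : d < lam) (hpos : 0 < lastLE C d) : lastLE C d ∈ C := by
  by_contra hnot
  refine hnot (hclosed _ (lastLE_le.trans_lt hd) ⟨hpos, fun γ hγ => ?_⟩)
  obtain ⟨c, hc, hγc⟩ := exists_lt_of_lt_csSup' hγ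
  exact ⟨c, hc.1, hγc, (le_lastLE hc.1 hc.2).lt_of_ne fun h => hnot (h ▸ hc.1)⟩

theorem lt_of_lastLE_eq {b' : Ordinal.{u}} (hb' : b' ∈ C) (hbb' : b < b')
    (h : lastLE C d = b) : d < b' :=
  lt_of_not_ge fun hle => (h ▸ le_lastLE hb' hle).not_gt hbb'

theorem nonempty_ord_toType {μ : Cardinal.{u}} (hμ : ℵ₀ ≤ μ) : Nonempty μ.ord.ToType :=
  Ordinal.nonempty_toType_iff.2 <| by simpa using (Cardinal.aleph0_pos.trans_le hμ).ne'

theorem exists_injOn_lastLE_eq {μ : Cardinal.{u}} (hμ : ℵ₀ ≤ μ)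
    (hunb : UnbIn (Order.succ μ).ord C) (hb : b < (Order.succ μ).ord) :
    ∃ F : Ordinal.{u} → μ.ord.ToType, InjOn F {d | lastLE C d = b} := by
  have := nonempty_ord_toType hμ
  obtain ⟨b', hb'C, hbb', hb'lt⟩ :=
    hunb (Order.succ b) ((Cardinal.isSuccLimit_ord (hμ.trans (Order.le_succ μ))).succ_lt hb)
  have hgap : {d | lastLE C d = b} ⊆ Iio b' := fun d hd =>
    lt_of_lastLE_eq hb'C ((Order.lt_succ b).trans_le hbb') hd
  have hb'card : b'.card ≤ μ := Order.lt_succ_iff.1 (Cardinal.lt_ord.1 hb'lt)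
  refine exists_injOn_of_lift_mk_le ?_
  calc Cardinal.lift.{u} #{d | lastLE C d = b}
      ≤ Cardinal.lift.{u} #(Iio b') := Cardinal.lift_le.2 (Cardinal.mk_le_mk_of_subset hgap)
    _ ≤ Cardinal.lift.{u + 1} #μ.ord.ToType := by
      rw [Cardinal.mk_Iio_ordinal, Cardinal.mk_toType, Cardinal.card_ord, Cardinal.lift_lift,
        Cardinal.lift_le]
      exact hb'card

end lastLE

namespace Tree'

variable {α β : Type u} {T : Tree' α} {μ : Cardinal.{u}} {C : Set Ordinal.{u}}

theorem isSpecial_of_isSpecialOn_club (hμ : ℵ₀ ≤ μ) (hht : ∀ x, T.ht x < (Order.succ μ).ord)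
    (hC : IsClubIn (Order.succ μ).ord C) (hsp : T.IsSpecialOn C μ) : T.IsSpecial μ := by
  classical
  obtain ⟨g, hg⟩ := hsp
  have := nonempty_ord_toType hμ
  choose! F hF using fun b (hb : b < (Order.succ μ).ord) => exists_injOn_lastLE_eq hμ hC.2.1 hb
  choose z hz_le hz_ht using fun x => T.exists_le_ht_eq x (lastLE_le (C := C))
  let colour (x : α) : Option μ.ord.ToType × μ.ord.ToType :=
    (if h : T.ht (z x) ∈ C then some (g ⟨z x, h⟩) else none, F (lastLE C (T.ht x)) (T.ht x))
  refine IsSpecial.of_colouring colour (fun x y hxy hcol => ?_) ?_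
  · have hxy_ht := ht_lt_ht hxy
    obtain ⟨hcol_z, hcol_F⟩ := Prod.mk.inj hcol
    rcases (lastLE_mono (C := C) hxy_ht.le).lt_or_eq with hB | hB
    · have hzy : T.ht (z y) ∈ C := by
        rw [hz_ht]
        exact lastLE_mem hC.2.2 (hht y) (zero_le.trans_lt hB)
      have hzx : T.ht (z x) ∈ C := by
        by_contra hzx
        simp only [dif_neg hzx, dif_pos hzy, reduceCtorEq] at hcol_z
      simp only [dif_pos hzx, dif_pos hzy, Option.some.injEq] at hcol_z
      have hzx_y : T.lt (z x) y := (hz_le x).elim (T.trans · hxy) fun h => by rwa [h]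
      refine hg ⟨z x, hzx⟩ ⟨z y, hzy⟩ (lt_of_ht_lt hzx_y (hz_le y) ?_) hcol_z
      rw [hz_ht, hz_ht]
      exact hB
    · exact hxy_ht.ne (hF _ (lastLE_le.trans_lt (hht x)) rfl hB.symm (by rwa [← hB] at hcol_F))
  · simp only [Cardinal.mk_prod, Cardinal.mk_option, Cardinal.lift_id, Cardinal.mk_toType,
      Cardinal.card_ord]
    rw [Cardinal.add_one_eq hμ, Cardinal.mul_eq_self hμ]

theorem isSpecialOn_of_clubIsoOn {U : Tree' β} (hT : T.IsSpecial μ) (hf : ClubIsoOn T U C) :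
    U.IsSpecialOn C μ := by
  obtain ⟨g, hg⟩ := hT
  obtain ⟨f, hf_bij, hf_lt⟩ := hf
  have hf_inv (y) : f (Function.surjInv hf_bij.2 y) = y := Function.surjInv_eq hf_bij.2 y
  refine ⟨fun y => g (Function.surjInv hf_bij.2 y).1, fun y₁ y₂ hlt => hg _ _ ?_⟩
  rwa [hf_lt, hf_inv, hf_inv]

end Tree'

/-- If a `μ⁺`-tree is special on a club of levels then it is special;
consequently a special `μ⁺`-tree cannot be club isomorphic to a non-special
one. -/
theorem stmt19 (μ : Cardinal.{u}) (hμ : ℵ₀ ≤ μ) {α : Type u} (T : Tree' α)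
    (hT : T.IsKTree (Order.succ μ)) (C : Set Ordinal.{u})
    (hC : IsClubIn (Order.succ μ).ord C) (hsp : T.IsSpecialOn C μ) :
    T.IsSpecial μ ∧
    ∀ (β γ : Type u) (T' : Tree' β) (U' : Tree' γ),
      T'.IsKTree (Order.succ μ) → U'.IsKTree (Order.succ μ) →
      T'.IsSpecial μ → ¬ U'.IsSpecial μ →
      ¬ ClubIsomorphic T' U' (Order.succ μ) := by
  refine ⟨Tree'.isSpecial_of_isSpecialOn_club hμ hT.1 hC hsp, ?_⟩
  rintro β γ T' U' - hU' hT'_special hU'_not_special ⟨C', hC', hiso⟩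
  exact hU'_not_special <| Tree'.isSpecial_of_isSpecialOn_club hμ hU'.1 hC'
    (Tree'.isSpecialOn_of_clubIsoOn hT'_special hiso)

end FarTrees
end
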